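/- arXiv:0803.2778 — 5 statements merged into one kernel-verified Lean document; each statement's English description precedes it below -/
import Mathlib

section
/- Let n ∈ ℕ, let q ∈ ℂ with q ≠ 0, and let λ₀,…,λₙ ∈ ℂ be nonzero scalars satisfying λ₀·λₙ·q^{-(n-r)r} = λ_r·λ_{n-r} for every 0 ≤ r ≤ n. Let Λ be the diagonal (n+1)×(n+1) matrix with diagonal entries λ₀,…,λₙ, and set σ₁^Λ = σ₁(q,n)·Λ and σ₂^Λ = Λ^♯·σ₂(q,n). Then σ₁^Λ·σ₂^Λ·σ₁^Λ = σ₂^Λ·σ₁^Λ·σ₂^Λ = λ₀·λₙ·S(q)·Λ. -/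
/-- The Gaussian ($q$-)binomial coefficient `C(n,k)_q`, defined by the recursion
`C(n+1,k)_q = C(n,k-1)_q + q^k * C(n,k)_q`, with `C(n,0)_q = C(n,n)_q = 1` and
`C(n,k)_q = 0` for `k > n`. -/
noncomputable def qBinom (q : ℂ) : ℕ → ℕ → ℂ
  | 0, 0 => 1
  | 0, _ + 1 => 0
  | _ + 1, 0 => 1
  | n + 1, k + 1 => qBinom q n k + q ^ (k + 1) * qBinom q n (k + 1)

/-- The matrix `σ₁(q,n)` with entries `σ₁(q,n)_{km} = C(n-k, n-m)_q`. -/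
noncomputable def sigma1 (q : ℂ) (n : ℕ) : Matrix (Fin (n + 1)) (Fin (n + 1)) ℂ :=
  fun k m => qBinom q (n - k.val) (n - m.val)

/-- The matrix `σ₂(q,n)` with entries
`σ₂(q,n)_{km} = (-1)^{k+m} q^{-(k-m)(k-m-1)/2} C(k,m)_{q⁻¹}` for `m ≤ k`, and `0` otherwise. -/
noncomputable def sigma2 (q : ℂ) (n : ℕ) : Matrix (Fin (n + 1)) (Fin (n + 1)) ℂ :=
  fun k m =>
    if m.val ≤ k.val then
      (-1 : ℂ) ^ (k.val + m.val) *
        q ^ (-(((k.val - m.val) * (k.val - m.val - 1) / 2 : ℕ) : ℤ)) *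
        qBinom q⁻¹ k.val m.val
    else 0

/-- The matrix `S(q)` with entries `S(q)_{km} = (-1)^k q^{-k(k-1)/2}` when `k+m = n`,
and `0` otherwise. -/
noncomputable def Smat (q : ℂ) (n : ℕ) : Matrix (Fin (n + 1)) (Fin (n + 1)) ℂ :=
  fun k m =>
    if k.val + m.val = n then (-1 : ℂ) ^ k.val * q ^ (-((k.val * (k.val - 1) / 2 : ℕ) : ℤ))
    else 0

/-- `A^♯`, the matrix with entries `(A^♯)_{ij} = A_{n-i, n-j}`. -/
noncomputable def msharp {n : ℕ} (A : Matrix (Fin (n + 1)) (Fin (n + 1)) ℂ) :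
    Matrix (Fin (n + 1)) (Fin (n + 1)) ℂ :=
  fun i j => A i.rev j.rev

/-!
Write `P = (C(k,m)_{q⁻¹})` for the lower-triangular `q⁻¹`-Pascal matrix, `J` for the
reversal permutation matrix, `D = diag((-1)^k q^{-k(k-1)/2})` and `Q = diag(q^{-(n-r)r})`.
Then `σ₂(q,n) = P⁻¹`, `S(q) = D J`, `σ₁(q,n) = J P_q J`, and the hypothesis on the `λ`'s says
exactly `Λ Λ^♯ = λ₀ λₙ Q`. Two identities carry the proof: conjugation by `D` exchanges `P_q`
and `P⁻¹`, so `S σ₁ = P⁻¹ S`; and a `q`-Vandermonde type summation gives `σ₁ Q = P S P`.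
Hence `σ₁ Q σ₂ σ₁ = P S P P⁻¹ σ₁ = P S σ₁ = S` and `σ₂ σ₁ Q σ₂ = P⁻¹ P S P P⁻¹ = S`, and the
diagonal factors are moved to the right using `Λ^♯ S = S Λ`.
-/

open Finset Matrix

section qBinom

variable (q : ℂ)

@[simp] lemma qBinom_zero_succ (k : ℕ) : qBinom q 0 (k + 1) = 0 := rfl

@[simp] lemma qBinom_zero_right (n : ℕ) : qBinom q n 0 = 1 := by
  cases n <;> rfl

lemma qBinom_succ_succ (n k : ℕ) :
    qBinom q (n + 1) (k + 1) = qBinom q n k + q ^ (k + 1) * qBinom q n (k + 1) := rfl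

lemma qBinom_eq_zero_of_lt {n k : ℕ} (h : n < k) : qBinom q n k = 0 := by
  induction n generalizing k with
  | zero => obtain ⟨k, rfl⟩ := Nat.exists_eq_succ_of_ne_zero h.ne'; rfl
  | succ n ih =>
    obtain ⟨k, rfl⟩ := Nat.exists_eq_succ_of_ne_zero (by omega : k ≠ 0)
    rw [qBinom_succ_succ, ih (by omega), ih (by omega), mul_zero, add_zero]

@[simp] lemma qBinom_self (n : ℕ) : qBinom q n n = 1 := by
  induction n with
  | zero => rfl
  | succ n ih =>
    rw [qBinom_succ_succ, ih, qBinom_eq_zero_of_lt q n.lt_succ_self, mul_zero, add_zero]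

lemma qBinom_succ_succ' (n k : ℕ) :
    qBinom q (n + 1) (k + 1) = q ^ (n - k) * qBinom q n k + qBinom q n (k + 1) := by
  induction n generalizing k with
  | zero => cases k <;> simp [qBinom_succ_succ]
  | succ n ih =>
    cases k with
    | zero =>
      have h := ih 0
      simp only [qBinom_succ_succ, qBinom_zero_right, Nat.sub_zero] at h ⊢
      linear_combination q * h
    | succ k =>
      rcases lt_or_ge k n with hkn | hkn
      · obtain ⟨d, rfl⟩ := Nat.exists_eq_add_of_lt hkn
        have h₁ := ih k
        have h₂ := ih (k + 1)
        rw [show k + d + 1 - k = d + 1 by omega] at h₁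
        rw [show k + d + 1 - (k + 1) = d by omega] at h₂
        rw [show k + d + 1 + 1 - (k + 1) = d + 1 by omega]
        linear_combination qBinom_succ_succ q (k + d + 1 + 1) (k + 1) + h₁ + q ^ (k + 2) * h₂
          - q ^ (d + 1) * qBinom_succ_succ q (k + d + 1) k - qBinom_succ_succ q (k + d + 1) (k + 1)
      · rcases hkn.eq_or_lt with rfl | hkn
        · simp [qBinom_succ_succ, qBinom_eq_zero_of_lt q (Nat.lt_succ_self _),
            qBinom_eq_zero_of_lt q (by omega : n < n + 1 + 1)]
        · simp [qBinom_eq_zero_of_lt q (by omega : n + 1 < k + 1),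
            qBinom_eq_zero_of_lt q (by omega : n + 1 + 1 < k + 1 + 1),
            qBinom_eq_zero_of_lt q (by omega : n + 1 < k + 1 + 1)]

lemma qBinom_symm {n k : ℕ} (h : k ≤ n) : qBinom q n (n - k) = qBinom q n k := by
  induction n generalizing k with
  | zero => obtain rfl := Nat.le_zero.mp h; rfl
  | succ n ih =>
    rcases k with _ | k
    · simp
    rcases h.eq_or_lt with h | h
    · obtain rfl : k = n := by omega
      simp
    obtain ⟨j, hj⟩ : ∃ j, n - k = j + 1 := ⟨n - k - 1, by omega⟩
    have h₁ : qBinom q n j = qBinom q n (k + 1) := by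
      rw [show j = n - (k + 1) by omega]; exact ih (by omega)
    have h₂ : qBinom q n (j + 1) = qBinom q n k := by
      rw [← hj]; exact ih (by omega)
    rw [show n + 1 - (k + 1) = j + 1 by omega, qBinom_succ_succ, qBinom_succ_succ', hj, h₁, h₂]
    ring

lemma qBinom_inv (hq : q ≠ 0) (n k : ℕ) :
    qBinom q⁻¹ n k = q⁻¹ ^ (k * (n - k)) * qBinom q n k := by
  induction n generalizing k with
  | zero => cases k <;> simp
  | succ n ih =>
    rcases k with _ | k
    · simp
    rcases lt_or_ge k n with hkn | hkn
    · obtain ⟨d, rfl⟩ := Nat.exists_eq_add_of_lt hkn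
      have hqq : q ^ (d + 1) * q⁻¹ ^ (d + 1) = 1 := by
        rw [← mul_pow, mul_inv_cancel₀ hq, one_pow]
      rw [qBinom_succ_succ q⁻¹, ih, ih, qBinom_succ_succ' q (k + d + 1) k,
        show k + d + 1 - k = d + 1 by omega, show k + d + 1 - (k + 1) = d by omega,
        show k + d + 1 + 1 - (k + 1) = d + 1 by omega]
      linear_combination (-(q⁻¹ ^ (k * (d + 1)) * qBinom q (k + d + 1) k)) * hqq
    · rcases hkn.eq_or_lt with rfl | hkn
      · simp
      · simp [qBinom_eq_zero_of_lt _ (by omega : k + 1 > n + 1)]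

end qBinom

section Sums

variable (q : ℂ)

lemma sum_qBinom_succ_mul (g : ℕ → ℂ) {k N : ℕ} (hk : k ≤ N) :
    ∑ j ∈ range (N + 2), qBinom q (k + 1) j * g j =
      ∑ j ∈ range (N + 1), qBinom q k j * (g (j + 1) + q ^ j * g j) := by
  have htrunc : ∑ j ∈ range (N + 2), qBinom q k j * (q ^ j * g j) =
      ∑ j ∈ range (N + 1), qBinom q k j * (q ^ j * g j) := by
    rw [sum_range_succ, qBinom_eq_zero_of_lt q (by omega : k < N + 1), zero_mul, add_zero]
  simp only [mul_add, sum_add_distrib]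
  rw [← htrunc, sum_range_succ' (fun j => qBinom q (k + 1) j * g j),
    sum_range_succ' (fun j => qBinom q k j * (q ^ j * g j))]
  simp only [qBinom_succ_succ, qBinom_zero_right, pow_zero, one_mul, add_mul, sum_add_distrib,
    add_assoc, mul_assoc, mul_left_comm (qBinom q k _)]

def qSign (k : ℕ) : ℂ := (-1) ^ k * q ^ k.choose 2

lemma qSign_succ (k : ℕ) : qSign q (k + 1) = -(q ^ k * qSign q k) := by
  simp only [qSign, Nat.choose_succ_succ, Nat.choose_one_right, pow_succ, pow_add]
  ring

lemma qSign_add (a b : ℕ) : qSign q (a + b) = qSign q a * qSign q b * q ^ (a * b) := by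
  induction b with
  | zero => simp [qSign]
  | succ b ih =>
    rw [← add_assoc, qSign_succ, qSign_succ, ih]
    ring

lemma sum_qBinom_succ_mul_qSign {k N : ℕ} (hk : k ≤ N) :
    ∑ j ∈ range (N + 2), qBinom q (k + 1) j * qSign q j = 0 := by
  rw [sum_qBinom_succ_mul q _ hk]
  simp [qSign_succ]

lemma qSign_sub_mul_qBinom_succ (j m : ℕ) :
    qSign q (j + 1 - (m + 1)) * qBinom q (j + 1) (m + 1) +
        q ^ j * (qSign q (j - (m + 1)) * qBinom q j (m + 1)) =
      qSign q (j - m) * qBinom q j m := by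
  rw [Nat.add_sub_add_right, qBinom_succ_succ]
  rcases lt_or_ge j (m + 1) with hj | hj
  · rw [qBinom_eq_zero_of_lt q hj]
    ring
  · obtain ⟨e, rfl⟩ := Nat.exists_eq_add_of_le hj
    rw [show m + 1 + e - m = e + 1 by omega, Nat.add_sub_cancel_left, qSign_succ]
    ring

lemma sum_qBinom_mul_qSign_mul_qBinom {k N : ℕ} (m : ℕ) (hk : k ≤ N) :
    ∑ j ∈ range (N + 1), qBinom q k j * (qSign q (j - m) * qBinom q j m) =
      if k = m then 1 else 0 := by
  induction k generalizing N m with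
  | zero => cases m <;> simp [sum_range_succ', qSign]
  | succ k ih =>
    obtain ⟨N, rfl⟩ : ∃ N', N = N' + 1 := ⟨N - 1, by omega⟩
    rcases m with _ | m
    · simpa using sum_qBinom_succ_mul_qSign q (by omega : k ≤ N)
    · rw [sum_qBinom_succ_mul q _ (by omega : k ≤ N)]
      simp only [qSign_sub_mul_qBinom_succ, ih m (by omega : k ≤ N), add_left_inj]

lemma qSign_mul_qBinom_sub_succ {i N : ℕ} (m : ℕ) (hi : i ≤ N) :
    qSign q (i + 1) * qBinom q (N + 1 - (i + 1)) (m + 1) +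
        q ^ i * (qSign q i * qBinom q (N + 1 - i) (m + 1)) =
      q ^ (N - m) * (qSign q i * qBinom q (N - i) m) := by
  obtain ⟨a, rfl⟩ := Nat.exists_eq_add_of_le hi
  rw [Nat.add_sub_add_right, Nat.add_sub_cancel_left, show i + a + 1 - i = a + 1 by omega,
    qBinom_succ_succ', qSign_succ]
  rcases lt_or_ge a m with ha | ha
  · rw [qBinom_eq_zero_of_lt q ha]
    ring
  · obtain ⟨b, rfl⟩ := Nat.exists_eq_add_of_le ha
    rw [show i + (m + b) - m = i + b by omega, Nat.add_sub_cancel_left, pow_add]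
    ring

lemma sum_qBinom_mul_qSign_mul_qBinom_sub {k N m : ℕ} (hk : k ≤ N) (hm : m ≤ N) :
    ∑ i ∈ range (N + 1), qBinom q k i * (qSign q i * qBinom q (N - i) m) =
      q ^ (k * (N - m)) * qBinom q (N - k) (N - m) := by
  induction k generalizing N m with
  | zero => simp [sum_range_succ', qSign, qBinom_symm q hm]
  | succ k ih =>
    obtain ⟨N, rfl⟩ : ∃ N', N = N' + 1 := ⟨N - 1, by omega⟩
    rcases m with _ | m
    · simpa [qBinom_eq_zero_of_lt q (by omega : N - k < N + 1)]
        using sum_qBinom_succ_mul_qSign q (by omega : k ≤ N)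
    · rw [sum_qBinom_succ_mul q _ (by omega : k ≤ N), Nat.add_sub_add_right,
        Nat.add_sub_add_right]
      rw [sum_congr rfl fun i hi => by
        rw [qSign_mul_qBinom_sub_succ q m (Nat.lt_succ_iff.mp (mem_range.mp hi)), mul_left_comm],
        ← mul_sum, ih (by omega) (by omega)]
      ring

end Sums

section Matrices

variable (q : ℂ) (n : ℕ)

noncomputable def qPascal : Matrix (Fin (n + 1)) (Fin (n + 1)) ℂ :=
  of fun k m => qBinom q k m

noncomputable def qPascalInv : Matrix (Fin (n + 1)) (Fin (n + 1)) ℂ :=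
  of fun k m => qSign q (k - m) * qBinom q k m

noncomputable def qWeight : Matrix (Fin (n + 1)) (Fin (n + 1)) ℂ :=
  diagonal fun r => q⁻¹ ^ ((n - r) * (r : ℕ))

lemma qPascal_mul_qPascalInv : qPascal q n * qPascalInv q n = 1 := by
  ext k m
  rw [mul_apply, one_apply]
  simp only [qPascal, qPascalInv, of_apply]
  rw [Fin.sum_univ_eq_sum_range (fun j => qBinom q k j * (qSign q (j - m) * qBinom q j m)),
    sum_qBinom_mul_qSign_mul_qBinom q m (Nat.lt_succ_iff.mp k.isLt)]
  simp [Fin.ext_iff]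

lemma qPascalInv_mul_qPascal : qPascalInv q n * qPascal q n = 1 :=
  mul_eq_one_comm.mp (qPascal_mul_qPascalInv q n)

lemma sigma2_eq_qPascalInv : sigma2 q n = qPascalInv q⁻¹ n := by
  ext k m
  simp only [sigma2, qPascalInv, of_apply]
  split_ifs with h
  · obtain ⟨d, hd⟩ := Nat.exists_eq_add_of_le h
    rw [hd, Nat.add_sub_cancel_left, ← Nat.choose_two_right, _root_.zpow_neg, zpow_natCast,
      ← inv_pow, qSign, show (m : ℕ) + d + m = d + 2 * m by ring, pow_add, pow_mul, neg_one_sq,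
      one_pow, mul_one]
  · rw [qBinom_eq_zero_of_lt _ (not_le.mp h), mul_zero]

lemma sigma1_eq_submatrix : sigma1 q n = (qPascal q n).submatrix Fin.revPerm Fin.revPerm := by
  ext k m
  simp [sigma1, qPascal, Fin.val_rev]

lemma Smat_eq_submatrix :
    Smat q n = (diagonal fun k : Fin (n + 1) => qSign q⁻¹ k).submatrix id Fin.revPerm := by
  ext k m
  have hk : (k : ℕ) + m = n ↔ k = m.rev := by
    rw [Fin.ext_iff, Fin.val_rev]
    omega
  simp only [Smat, submatrix_apply, diagonal_apply, id, Fin.revPerm_apply, hk,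
    ← Nat.choose_two_right, _root_.zpow_neg, zpow_natCast, ← inv_pow, qSign]

variable {q}

lemma diagonal_qSign_mul_qPascal (hq : q ≠ 0) :
    diagonal (fun k : Fin (n + 1) => qSign q⁻¹ k) * qPascal q n =
      qPascalInv q⁻¹ n * diagonal fun k : Fin (n + 1) => qSign q⁻¹ k := by
  ext k m
  rw [diagonal_mul, mul_diagonal]
  simp only [qPascal, qPascalInv, of_apply]
  rcases lt_or_ge (k : ℕ) m with hkm | hkm
  · simp [qBinom_eq_zero_of_lt _ hkm]
  · obtain ⟨d, hd⟩ := Nat.exists_eq_add_of_le hkm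
    rw [qBinom_inv q hq, hd, Nat.add_sub_cancel_left, qSign_add]
    ring

end Matrices

section Braid

variable {q : ℂ} {n : ℕ}

lemma sigma1_mul_qWeight (hq : q ≠ 0) :
    sigma1 q n * qWeight q n = qPascal q⁻¹ n * Smat q n * qPascal q⁻¹ n := by
  have hS : Smat q n * qPascal q⁻¹ n =
      diagonal (fun k : Fin (n + 1) => qSign q⁻¹ k) *
        (qPascal q⁻¹ n).submatrix Fin.revPerm id := by
    simpa [Smat_eq_submatrix] using
      submatrix_id_mul_right (diagonal fun k : Fin (n + 1) => qSign q⁻¹ k) (qPascal q⁻¹ n) id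
        Fin.revPerm
  ext k m
  have hk : (k : ℕ) ≤ n := Nat.lt_succ_iff.mp k.isLt
  have hm : (m : ℕ) ≤ n := Nat.lt_succ_iff.mp m.isLt
  rw [mul_assoc, hS, qWeight, mul_diagonal, mul_apply]
  simp only [diagonal_mul, qPascal, of_apply, submatrix_apply, id, Fin.revPerm_apply,
    Fin.val_rev, Nat.add_sub_add_right, sigma1]
  rw [Fin.sum_univ_eq_sum_range
      (fun i => qBinom q⁻¹ k i * (qSign q⁻¹ i * qBinom q⁻¹ (n - i) m)),
    sum_qBinom_mul_qSign_mul_qBinom_sub _ hk hm, qBinom_inv q hq]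
  rcases lt_or_ge (m : ℕ) k with hmk | hkm
  · rw [qBinom_eq_zero_of_lt _ (by omega : n - k < n - m)]
    ring
  · obtain ⟨d, hd⟩ := Nat.exists_eq_add_of_le hkm
    rw [show n - k - (n - m) = d by omega, hd]
    ring

lemma Smat_mul_sigma1 (hq : q ≠ 0) : Smat q n * sigma1 q n = qPascalInv q⁻¹ n * Smat q n := by
  rw [Smat_eq_submatrix, sigma1_eq_submatrix, submatrix_mul_equiv, diagonal_qSign_mul_qPascal n hq,
    submatrix_mul _ _ id id _ Function.bijective_id, submatrix_id_id]

lemma sigma1_mul_qWeight_mul_sigma2_mul_sigma1 (hq : q ≠ 0) :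
    sigma1 q n * qWeight q n * sigma2 q n * sigma1 q n = Smat q n := by
  rw [sigma1_mul_qWeight hq, sigma2_eq_qPascalInv, mul_assoc _ (qPascal q⁻¹ n),
    qPascal_mul_qPascalInv, mul_one, mul_assoc, Smat_mul_sigma1 hq, ← mul_assoc,
    qPascal_mul_qPascalInv, one_mul]

lemma sigma2_mul_sigma1_mul_qWeight_mul_sigma2 (hq : q ≠ 0) :
    sigma2 q n * (sigma1 q n * qWeight q n * sigma2 q n) = Smat q n := by
  rw [sigma1_mul_qWeight hq, sigma2_eq_qPascalInv, mul_assoc _ (qPascal q⁻¹ n),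
    qPascal_mul_qPascalInv, mul_one, ← mul_assoc, qPascalInv_mul_qPascal, one_mul]

lemma msharp_diagonal (d : Fin (n + 1) → ℂ) : msharp (diagonal d) = diagonal fun i => d i.rev :=
  submatrix_diagonal d Fin.rev Fin.rev_injective

lemma msharp_diagonal_mul_Smat (d : Fin (n + 1) → ℂ) :
    msharp (diagonal d) * Smat q n = Smat q n * diagonal d := by
  ext i j
  rw [msharp_diagonal, diagonal_mul, mul_diagonal, Smat_eq_submatrix]
  simp only [submatrix_apply, id, Fin.revPerm_apply, diagonal_apply]
  split_ifs with h
  · rw [h, Fin.rev_rev, mul_comm]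
  · rw [mul_zero, zero_mul]

lemma diagonal_mul_msharp_diagonal (lam : Fin (n + 1) → ℂ)
    (hcond : ∀ r : Fin (n + 1),
      lam 0 * lam (Fin.last n) * q ^ (-(((n - r.val) * r.val : ℕ) : ℤ)) = lam r * lam r.rev) :
    diagonal lam * msharp (diagonal lam) = (lam 0 * lam (Fin.last n)) • qWeight q n := by
  rw [msharp_diagonal, diagonal_mul_diagonal, qWeight, ← diagonal_smul]
  congr 1
  ext r
  rw [← hcond r, _root_.zpow_neg, zpow_natCast, ← inv_pow, Pi.smul_apply, smul_eq_mul]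

end Braid

theorem braid_relation_qPascal_general (n : ℕ) (q : ℂ) (hq : q ≠ 0)
    (lam : Fin (n + 1) → ℂ)
    (hcond : ∀ r : Fin (n + 1),
      lam 0 * lam (Fin.last n) * q ^ (-(((n - r.val) * r.val : ℕ) : ℤ)) = lam r * lam r.rev)
    (Λ s1 s2 : Matrix (Fin (n + 1)) (Fin (n + 1)) ℂ)
    (hΛ : Λ = Matrix.diagonal lam)
    (hs1 : s1 = sigma1 q n * Λ)
    (hs2 : s2 = msharp Λ * sigma2 q n) :
    s1 * s2 * s1 = s2 * s1 * s2 ∧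
      s1 * s2 * s1 = (lam 0 * lam (Fin.last n)) • (Smat q n * Λ) := by
  subst hΛ hs1 hs2
  have hmid : sigma1 q n * diagonal lam * (msharp (diagonal lam) * sigma2 q n) =
      (lam 0 * lam (Fin.last n)) • (sigma1 q n * qWeight q n * sigma2 q n) := by
    rw [mul_assoc, ← mul_assoc (diagonal lam), diagonal_mul_msharp_diagonal lam hcond,
      Matrix.smul_mul, Matrix.mul_smul, mul_assoc]
  have h121 : sigma1 q n * diagonal lam * (msharp (diagonal lam) * sigma2 q n) *
      (sigma1 q n * diagonal lam) = (lam 0 * lam (Fin.last n)) • (Smat q n * diagonal lam) := by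
    rw [hmid, Matrix.smul_mul, ← mul_assoc, sigma1_mul_qWeight_mul_sigma2_mul_sigma1 hq]
  refine ⟨?_, h121⟩
  rw [h121, mul_assoc, hmid, Matrix.mul_smul, mul_assoc,
    sigma2_mul_sigma1_mul_qWeight_mul_sigma2 hq, msharp_diagonal_mul_Smat]

/-- For `q ≠ 0` and nonzero `λ₀, …, λₙ` with
`λ₀ λₙ q^{-(n-r)r} = λ_r λ_{n-r}` for all `0 ≤ r ≤ n`, setting `Λ = diag(λ₀, …, λₙ)`,
`σ₁^Λ = σ₁(q,n) Λ` and `σ₂^Λ = Λ^♯ σ₂(q,n)`, we have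
`σ₁^Λ σ₂^Λ σ₁^Λ = σ₂^Λ σ₁^Λ σ₂^Λ = λ₀ λₙ S(q) Λ`. -/
theorem braid_relation_qPascal (n : ℕ) (q : ℂ) (hq : q ≠ 0)
    (lam : Fin (n + 1) → ℂ) (hlam : ∀ r, lam r ≠ 0)
    (hcond : ∀ r : Fin (n + 1),
      lam 0 * lam (Fin.last n) * q ^ (-(((n - r.val) * r.val : ℕ) : ℤ)) = lam r * lam r.rev)
    (Λ s1 s2 : Matrix (Fin (n + 1)) (Fin (n + 1)) ℂ)
    (hΛ : Λ = Matrix.diagonal lam)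
    (hs1 : s1 = sigma1 q n * Λ)
    (hs2 : s2 = msharp Λ * sigma2 q n) :
    s1 * s2 * s1 = s2 * s1 * s2 ∧
      s1 * s2 * s1 = (lam 0 * lam (Fin.last n)) • (Smat q n * Λ) :=
  braid_relation_qPascal_general n q hq lam hcond Λ s1 s2 hΛ hs1 hs2
end

section
/- Let n ∈ ℕ and let σ₁, σ₂, S be the (n+1)×(n+1) integer matrices with entries σ₁_{km} = binom(n-k, n-m), σ₂_{km} = (-1)^{k+m}·binom(k, m), and S_{km} = (-1)^k if k+m = n and S_{km} = 0 otherwise. Then σ₁·σ₂·σ₁ = σ₂·σ₁·σ₂ = S. -/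
/-!
Write `P k m = C(k, m)` for the Pascal matrix, `D = diag((-1)^k)` and `J` for the exchange matrix,
so that `σ₁ = J P J`, `σ₂ = D P D` and `S = D J`. Two alternating binomial sums, both read off
iterated forward differences of `x ↦ C(x, m)`, give binomial inversion `(P D)² = 1` and
`P D J P = J P J`. Together with `D² = J² = 1` and `J D J = (-1)ⁿ D`, these relations imply
both braid relations by a computation in the ring of matrices.
-/

open Finset Matrix fwdDiff

theorem fwdDiff_iter_choose_apply (k m y : ℕ) :
    (fwdDiff 1)^[k] (fun x ↦ x.choose m : ℕ → ℤ) y =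
      if k ≤ m then (y.choose (m - k) : ℤ) else 0 := by
  split_ifs with hkm
  · obtain ⟨j, rfl⟩ := Nat.exists_eq_add_of_le hkm
    rw [fwdDiff_iter_choose, Nat.add_sub_cancel_left]
  · obtain ⟨j, rfl⟩ : ∃ j, k = j + 1 + m := ⟨k - m - 1, by omega⟩
    have hconst := fwdDiff_iter_choose 0 m
    simp only [add_zero, Nat.choose_zero_right, Nat.cast_one] at hconst
    rw [Function.iterate_add_apply, hconst, Function.iterate_succ_apply, fwdDiff_const]
    simp [fwdDiff_iter_eq_sum_shift]

theorem sum_range_neg_one_pow_mul_choose_mul_choose_add (k m y : ℕ) :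
    ∑ i ∈ range (k + 1), (-1 : ℤ) ^ (k - i) * k.choose i * (y + i).choose m =
      if k ≤ m then (y.choose (m - k) : ℤ) else 0 := by
  simp [← fwdDiff_iter_choose_apply, fwdDiff_iter_eq_sum_shift]

theorem neg_one_pow_sub_eq_mul {j k : ℕ} (h : j ≤ k) :
    (-1 : ℤ) ^ (k - j) = (-1) ^ k * (-1) ^ j := by
  rw [← pow_sub_mul_pow (-1 : ℤ) h, mul_assoc, pow_mul_pow_eq_one j (by norm_num), mul_one]

theorem sum_range_choose_mul_neg_one_pow_mul_choose (k m : ℕ) :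
    ∑ j ∈ range (k + 1), (k.choose j : ℤ) * ((-1) ^ j * j.choose m) =
      if k = m then (-1) ^ k else 0 := by
  have hsq : (-1 : ℤ) ^ k * (-1) ^ k = 1 := pow_mul_pow_eq_one k (by norm_num)
  calc ∑ j ∈ range (k + 1), (k.choose j : ℤ) * ((-1) ^ j * j.choose m)
      = (-1) ^ k *
          ∑ j ∈ range (k + 1), (-1 : ℤ) ^ (k - j) * k.choose j * (0 + j).choose m := by
        rw [mul_sum]
        refine sum_congr rfl fun j hj ↦ ?_
        rw [neg_one_pow_sub_eq_mul (Nat.le_of_lt_succ (mem_range.mp hj)), zero_add]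
        linear_combination (-(k.choose j : ℤ) * (-1) ^ j * j.choose m) * hsq
    _ = if k = m then (-1) ^ k else 0 := by
        rw [sum_range_neg_one_pow_mul_choose_mul_choose_add]
        rcases lt_trichotomy k m with hkm | rfl | hkm
        · rw [if_pos hkm.le, if_neg hkm.ne, Nat.choose_eq_zero_of_lt (by omega), Nat.cast_zero,
            mul_zero]
        · simp
        · rw [if_neg (by omega), if_neg hkm.ne', mul_zero]

theorem sum_range_choose_mul_neg_one_pow_mul_choose_sub {k y : ℕ} (hk : k ≤ y) (m : ℕ) :
    ∑ j ∈ range (k + 1), (k.choose j : ℤ) * ((-1) ^ j * (y - j).choose m) =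
      if k ≤ m then ((y - k).choose (m - k) : ℤ) else 0 := by
  rw [← sum_range_reflect, ← sum_range_neg_one_pow_mul_choose_mul_choose_add]
  refine sum_congr rfl fun j hj ↦ ?_
  have hj : j ≤ k := Nat.le_of_lt_succ (mem_range.mp hj)
  rw [Nat.add_sub_cancel, Nat.choose_symm hj, show y - (k - j) = y - k + j by omega]
  ring

theorem braid_relations_of_pascal_relations {R : Type*} [Ring R] {p d j : R} {ε : ℤ}
    (hε : ε * ε = 1) (hd : d * d = 1) (hj : j * j = 1) (hjdj : j * d * j = ε • d)
    (hpd : p * d * p * d = 1) (hpdjp : p * d * j * p = j * p * j) :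
    (j * p * j) * (d * p * d) * (j * p * j) = d * j ∧
      (d * p * d) * (j * p * j) * (d * p * d) = d * j := by
  have hpdp : p * d * p = d := by
    calc p * d * p = p * d * p * d * d := by rw [mul_assoc _ d d, hd, mul_one]
      _ = d := by rw [hpd, one_mul]
  have hjd : j * d = ε • (d * j) := by
    calc j * d = j * d * j * j := by rw [mul_assoc _ j j, hj, mul_one]
      _ = ε • (d * j) := by rw [hjdj, smul_mul_assoc]
  constructor
  · calc (j * p * j) * (d * p * d) * (j * p * j)
          = (j * p * j) * (d * p * d) * (p * d * j * p) := by rw [hpdjp]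
      _ = j * p * j * d * (p * d * p * d) * j * p := by simp only [mul_assoc]
      _ = j * p * (j * d * j) * p := by rw [hpd, mul_one]; simp only [mul_assoc]
      _ = ε • (j * (p * d * p)) := by
        rw [hjdj]; simp only [mul_smul_comm, smul_mul_assoc, mul_assoc]
      _ = d * j := by rw [hpdp, hjd, smul_smul, hε, one_smul]
  · calc (d * p * d) * (j * p * j) * (d * p * d)
          = d * (p * d * p * d) * j * (p * d * p * d) := by rw [← hpdjp]; simp only [mul_assoc]
      _ = d * j := by rw [hpd, mul_one, mul_one]

theorem sum_fin_choose_mul_eq_sum_range {n k : ℕ} (hk : k ≤ n) (g : ℕ → ℤ) :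
    ∑ j : Fin (n + 1), (k.choose j : ℤ) * g j =
      ∑ j ∈ range (k + 1), (k.choose j : ℤ) * g j := by
  rw [Fin.sum_univ_eq_sum_range (fun j ↦ (k.choose j : ℤ) * g j)]
  refine (sum_subset (range_subset_range.mpr (by omega)) fun j _ hj ↦ ?_).symm
  rw [Nat.choose_eq_zero_of_lt (by simpa using hj), Nat.cast_zero, zero_mul]

section PascalMatrices

variable (n : ℕ)

def pascalMatrix : Matrix (Fin (n + 1)) (Fin (n + 1)) ℤ :=
  of fun k m ↦ (k.val.choose m.val : ℤ)

def signMatrix : Matrix (Fin (n + 1)) (Fin (n + 1)) ℤ := diagonal fun k ↦ (-1) ^ k.val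

def exchangeMatrix : Matrix (Fin (n + 1)) (Fin (n + 1)) ℤ :=
  (1 : Matrix _ _ ℤ).submatrix Fin.rev id

variable {n}

theorem exchangeMatrix_mul (A : Matrix (Fin (n + 1)) (Fin (n + 1)) ℤ) :
    exchangeMatrix n * A = A.submatrix Fin.rev id :=
  one_submatrix_mul Fin.rev (Equiv.refl _) A

theorem mul_exchangeMatrix (A : Matrix (Fin (n + 1)) (Fin (n + 1)) ℤ) :
    A * exchangeMatrix n = A.submatrix id Fin.rev :=
  mul_submatrix_one Fin.revPerm id A

theorem exchangeMatrix_mul_self : exchangeMatrix n * exchangeMatrix n = 1 := by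
  rw [exchangeMatrix_mul]
  ext k m
  rw [exchangeMatrix, submatrix_apply, submatrix_apply, Fin.rev_rev]
  rfl

theorem signMatrix_mul_self : signMatrix n * signMatrix n = 1 := by
  rw [signMatrix, diagonal_mul_diagonal, ← diagonal_one]
  congr 1 with k
  exact pow_mul_pow_eq_one _ (by norm_num)

theorem exchangeMatrix_mul_signMatrix_mul_exchangeMatrix :
    exchangeMatrix n * signMatrix n * exchangeMatrix n = (-1) ^ n • signMatrix n := by
  ext k m
  rw [exchangeMatrix_mul, mul_exchangeMatrix, Matrix.smul_apply]
  simp only [submatrix_apply, id_eq, signMatrix, diagonal_apply, Fin.rev_inj]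
  split_ifs
  · rw [Fin.val_rev, Nat.add_sub_add_right, neg_one_pow_sub_eq_mul (Nat.le_of_lt_succ k.isLt),
      smul_eq_mul]
  · rw [smul_zero]

theorem exchangeMatrix_mul_pascalMatrix_mul_exchangeMatrix_apply (k m : Fin (n + 1)) :
    (exchangeMatrix n * pascalMatrix n * exchangeMatrix n) k m =
      ((n - k.val).choose (n - m.val) : ℤ) := by
  rw [exchangeMatrix_mul, mul_exchangeMatrix]
  simp [pascalMatrix, Fin.val_rev]

theorem signMatrix_mul_pascalMatrix_mul_signMatrix_apply (k m : Fin (n + 1)) :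
    (signMatrix n * pascalMatrix n * signMatrix n) k m =
      (-1) ^ (k.val + m.val) * (k.val.choose m.val : ℤ) := by
  rw [signMatrix, mul_diagonal, diagonal_mul, pascalMatrix, of_apply]
  ring

theorem signMatrix_mul_exchangeMatrix_apply (k m : Fin (n + 1)) :
    (signMatrix n * exchangeMatrix n) k m = if k.val + m.val = n then (-1) ^ k.val else 0 := by
  rw [mul_exchangeMatrix, submatrix_apply, id_eq, signMatrix, diagonal_apply]
  have hrev : k = m.rev ↔ k.val + m.val = n := by
    rw [Fin.ext_iff, Fin.val_rev]
    omega
  simp only [hrev]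

theorem pascalMatrix_mul_signMatrix_mul_pascalMatrix_mul_signMatrix :
    pascalMatrix n * signMatrix n * pascalMatrix n * signMatrix n = 1 := by
  ext k m
  rw [signMatrix, mul_diagonal, mul_apply]
  simp only [mul_diagonal, pascalMatrix, of_apply, mul_assoc]
  rw [sum_fin_choose_mul_eq_sum_range (Nat.le_of_lt_succ k.isLt)
      (fun j ↦ (-1) ^ j * (j.choose m.val : ℤ)),
    sum_range_choose_mul_neg_one_pow_mul_choose, one_apply]
  by_cases hkm : k = m
  · rw [if_pos (congrArg Fin.val hkm), if_pos hkm, hkm, pow_mul_pow_eq_one _ (by norm_num)]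
  · rw [if_neg (Fin.val_injective.ne hkm), if_neg hkm, zero_mul]

theorem pascalMatrix_mul_signMatrix_mul_exchangeMatrix_mul_pascalMatrix :
    pascalMatrix n * signMatrix n * exchangeMatrix n * pascalMatrix n =
      exchangeMatrix n * pascalMatrix n * exchangeMatrix n := by
  ext k m
  have hk : k.val ≤ n := Nat.le_of_lt_succ k.isLt
  have hm : m.val ≤ n := Nat.le_of_lt_succ m.isLt
  rw [exchangeMatrix_mul_pascalMatrix_mul_exchangeMatrix_apply, mul_assoc, exchangeMatrix_mul,
    mul_apply]
  simp only [signMatrix, mul_diagonal, submatrix_apply, id_eq, pascalMatrix, of_apply, Fin.val_rev,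
    Nat.add_sub_add_right, mul_assoc]
  rw [sum_fin_choose_mul_eq_sum_range hk (fun j ↦ (-1) ^ j * ((n - j).choose m.val : ℤ)),
    sum_range_choose_mul_neg_one_pow_mul_choose_sub hk]
  split_ifs with hkm
  · rw [Nat.choose_symm_of_eq_add (show n - k.val = (m.val - k.val) + (n - m.val) by omega)]
  · rw [Nat.choose_eq_zero_of_lt (by omega), Nat.cast_zero]

end PascalMatrices

/-- For the `(n+1)×(n+1)` integer matrices with entries
`σ₁_{km} = binom(n-k, n-m)`, `σ₂_{km} = (-1)^{k+m} binom(k,m)`, and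
`S_{km} = (-1)^k` if `k+m = n` and `0` otherwise, we have `σ₁ σ₂ σ₁ = σ₂ σ₁ σ₂ = S`. -/
theorem braid_relation_pascal (n : ℕ)
    (σ1 σ2 S : Matrix (Fin (n + 1)) (Fin (n + 1)) ℤ)
    (hσ1 : ∀ k m : Fin (n + 1), σ1 k m = (Nat.choose (n - k.val) (n - m.val) : ℤ))
    (hσ2 : ∀ k m : Fin (n + 1), σ2 k m = (-1) ^ (k.val + m.val) * (Nat.choose k.val m.val : ℤ))
    (hS : ∀ k m : Fin (n + 1), S k m = if k.val + m.val = n then (-1) ^ k.val else 0) :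
    σ1 * σ2 * σ1 = S ∧ σ2 * σ1 * σ2 = S := by
  obtain rfl : σ1 = exchangeMatrix n * pascalMatrix n * exchangeMatrix n := ext fun k m ↦ by
    rw [hσ1, exchangeMatrix_mul_pascalMatrix_mul_exchangeMatrix_apply]
  obtain rfl : σ2 = signMatrix n * pascalMatrix n * signMatrix n := ext fun k m ↦ by
    rw [hσ2, signMatrix_mul_pascalMatrix_mul_signMatrix_apply]
  obtain rfl : S = signMatrix n * exchangeMatrix n := ext fun k m ↦ by
    rw [hS, signMatrix_mul_exchangeMatrix_apply]
  exact braid_relations_of_pascal_relations (pow_mul_pow_eq_one n (by norm_num))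
    signMatrix_mul_self exchangeMatrix_mul_self exchangeMatrix_mul_signMatrix_mul_exchangeMatrix
    pascalMatrix_mul_signMatrix_mul_pascalMatrix_mul_signMatrix
    pascalMatrix_mul_signMatrix_mul_exchangeMatrix_mul_pascalMatrix
end

section
/- Let n ∈ ℕ and let T be the (n+1)×(n+1) complex matrix with entries T_{k,k+1} = k+1 for 0 ≤ k ≤ n-1 and all other entries 0. Then the matrix exponential exp(T) has entries (exp T)_{km} = binom(m, k) for all k, m ∈ {0,…,n} (in particular (exp T)_{km} = 0 for k > m). -/
/-! In the basis of monomials `x^k`, `T` is the matrix of `d/dx` on polynomials of degree `≤ n`,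
so `exp T` is the translation `p(x) ↦ p(x + 1)`, whose columns are the binomial expansions of
`(x + 1)^m`. Concretely, `T^j` carries the falling factorials `m (m-1) ⋯ (m-j+1)` on its `j`-th
superdiagonal, so `T` is nilpotent and the exponential series is the finite sum of these entries
divided by `j!`. -/

open Finset Nat

theorem NormedSpace.exp_eq_sum_range_of_pow_eq_zero {𝔸 : Type*} [Ring 𝔸] [Algebra ℚ 𝔸]
    [TopologicalSpace 𝔸] [IsTopologicalRing 𝔸] {x : 𝔸} {N : ℕ} (hx : x ^ N = 0) :
    NormedSpace.exp x = ∑ j ∈ range N, (j !⁻¹ : ℚ) • x ^ j := by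
  rw [NormedSpace.exp_eq_tsum_rat]
  refine tsum_eq_sum fun j hj => ?_
  rw [pow_eq_zero_of_le (by simpa using hj) hx, smul_zero]

theorem inv_factorial_smul_descFactorial {R : Type*} [Semiring R] [Algebra ℚ R] (m j : ℕ) :
    (j !⁻¹ : ℚ) • (m.descFactorial j : R) = m.choose j := by
  rw [descFactorial_eq_factorial_mul_choose, Nat.cast_mul, ← nsmul_eq_mul,
    ← Nat.cast_smul_eq_nsmul ℚ, smul_smul, inv_mul_cancel₀ (by positivity), one_smul]

namespace Matrix

variable {R : Type*} [Semiring R] {n : ℕ} {T : Matrix (Fin n) (Fin n) R}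

theorem pow_apply_eq_descFactorial
    (hT : ∀ k m : Fin n, T k m = if m.val = k.val + 1 then ((k.val : R) + 1) else 0)
    (j : ℕ) (k m : Fin n) :
    (T ^ j) k m = if m.val = k.val + j then (m.val.descFactorial j : R) else 0 := by
  induction j generalizing k with
  | zero => simp [one_apply, Fin.ext_iff, eq_comm]
  | succ j ih =>
    rw [_root_.pow_succ', mul_apply]
    simp_rw [hT, ih]
    split_ifs with hm
    · have hk : k.val + 1 < n := by omega
      rw [sum_eq_single ⟨k.val + 1, hk⟩ (fun l _ hl => by
          rw [if_neg (fun h => hl (Fin.ext h)), zero_mul]) (by simp),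
        if_pos rfl, if_pos (show m.val = k.val + 1 + j by omega), descFactorial_succ,
        show m.val - j = k.val + 1 by omega]
      push_cast
      rfl
    · exact sum_eq_zero fun l _ => by split_ifs <;> first | omega | simp

theorem pow_card_eq_zero_of_superdiagonal
    (hT : ∀ k m : Fin n, T k m = if m.val = k.val + 1 then ((k.val : R) + 1) else 0) :
    T ^ n = 0 := by
  ext k m
  rw [pow_apply_eq_descFactorial hT, if_neg (by omega), zero_apply]

end Matrix

/-- If `T` is the `(n+1)×(n+1)` complex matrix with `T_{k,k+1} = k+1`
for `0 ≤ k ≤ n-1` and all other entries `0`, then the matrix exponential of `T` has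
entries `(exp T)_{km} = binom(m,k)`. -/
theorem exp_superdiagonal_eq_pascal (n : ℕ)
    (T : Matrix (Fin (n + 1)) (Fin (n + 1)) ℂ)
    (hT : ∀ k m : Fin (n + 1), T k m = if m.val = k.val + 1 then ((k.val : ℂ) + 1) else 0) :
    ∀ k m : Fin (n + 1), NormedSpace.exp T k m = (Nat.choose m.val k.val : ℂ) := by
  intro k m
  rw [NormedSpace.exp_eq_sum_range_of_pow_eq_zero (Matrix.pow_card_eq_zero_of_superdiagonal hT),
    Matrix.sum_apply]
  simp_rw [Matrix.smul_apply, Matrix.pow_apply_eq_descFactorial hT]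
  by_cases hkm : k.val ≤ m.val
  · rw [sum_eq_single (m.val - k.val) (fun j _ hj => by rw [if_neg (by omega), smul_zero])
        (fun h => absurd (mem_range.2 (by omega)) h),
      if_pos (by omega), inv_factorial_smul_descFactorial, Nat.choose_symm hkm]
  · rw [Nat.choose_eq_zero_of_lt (by omega), Nat.cast_zero]
    exact sum_eq_zero fun j _ => by rw [if_neg (by omega), smul_zero]
end

section
/- Let n ∈ ℕ and q ∈ ℂ, and for j ≥ 1 set (j)_q = 1 + q + … + q^{j-1} and (m)!_q = ∏_{j=1}^{m} (j)_q with (0)!_q = 1. Assume (j)_q ≠ 0 for all 1 ≤ j ≤ n. Let T_q be the (n+1)×(n+1) complex matrix with entries (T_q)_{k,k+1} = (k+1)_q for 0 ≤ k ≤ n-1 and all other entries 0. Then the matrix E = ∑_{m=0}^{n} (1/(m)!_q)·T_q^m (a finite sum, since T_q^{n+1} = 0) has entries E_{km} = C(m, k)_q for all k, m ∈ {0,…,n}. -/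
/-- The `q`-integer `(j)_q = 1 + q + ⋯ + q^{j-1}`. -/
noncomputable def qInt (q : ℂ) (j : ℕ) : ℂ := ∑ i ∈ Finset.range j, q ^ i

/-- The `q`-factorial `(m)!_q = (1)_q (2)_q ⋯ (m)_q`, with `(0)!_q = 1`. -/
noncomputable def qFact (q : ℂ) (m : ℕ) : ℂ := ∏ j ∈ Finset.range m, qInt q (j + 1)

/-!
For `k ≤ m` the superdiagonal matrix satisfies `(T_q^i)_{k,m} = (k+1)_q ⋯ (m)_q = (m)!_q / (k)!_q`
exactly when `i = m - k`, and vanishes otherwise. Hence `E_{km} = (m)!_q / ((k)!_q (m-k)!_q)`, which is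
`C(m,k)_q` by the `q`-analogue of `n! = C(n,k) k! (n-k)!`; this identity follows from the Pascal
recursion together with `(k+l+2)_q = (k+1)_q + q^{k+1} (l+1)_q`.
-/

open Finset

theorem Matrix.pow_superdiag_apply {R : Type*} [CommSemiring R] {n : ℕ} (w : ℕ → R)
    (T : Matrix (Fin n) (Fin n) R) (hT : ∀ k m : Fin n, T k m = if m.val = k.val + 1 then w k else 0)
    (i : ℕ) (k m : Fin n) :
    (T ^ i) k m = if m.val = k.val + i then ∏ j ∈ range i, w (k + j) else 0 := by
  induction i generalizing m with
  | zero => simp [Matrix.one_apply, Fin.ext_iff, eq_comm]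
  | succ i ih =>
    rw [pow_succ, Matrix.mul_apply]
    by_cases hm : m.val = k.val + (i + 1)
    · rw [Fintype.sum_eq_single ⟨k + i, by omega⟩, ih, hT, if_pos rfl,
        if_pos (show m.val = k + i + 1 by omega), if_pos hm, prod_range_succ]
      intro x hx
      rw [ih, hT, if_neg (fun h => hx (Fin.ext h)), zero_mul]
    · rw [if_neg hm]
      refine sum_eq_zero fun x _ => ?_
      rw [ih, hT]
      split_ifs <;> first | omega | simp

namespace qBinom

variable (q : ℂ)

theorem zero_right (n : ℕ) : qBinom q n 0 = 1 := by
  cases n <;> rfl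

theorem succ_succ (n k : ℕ) :
    qBinom q (n + 1) (k + 1) = qBinom q n k + q ^ (k + 1) * qBinom q n (k + 1) :=
  rfl

theorem eq_zero_of_lt {n k : ℕ} (h : n < k) : qBinom q n k = 0 := by
  induction n generalizing k with
  | zero => obtain ⟨k, rfl⟩ := Nat.exists_eq_add_one.2 h; rfl
  | succ n ih =>
    obtain ⟨k, rfl⟩ := Nat.exists_eq_add_one.2 (Nat.zero_lt_of_lt h)
    rw [succ_succ, ih (by omega), ih (by omega), mul_zero, add_zero]

theorem self (n : ℕ) : qBinom q n n = 1 := by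
  induction n with
  | zero => rfl
  | succ n ih => rw [succ_succ, ih, eq_zero_of_lt q (Nat.lt_succ_self n), mul_zero, add_zero]

end qBinom

theorem qInt_add (q : ℂ) (a b : ℕ) : qInt q (a + b) = qInt q a + q ^ a * qInt q b := by
  simp [qInt, sum_range_add, pow_add, mul_sum]

theorem qFact_zero (q : ℂ) : qFact q 0 = 1 := rfl

theorem qFact_succ (q : ℂ) (m : ℕ) : qFact q (m + 1) = qFact q m * qInt q (m + 1) :=
  prod_range_succ _ _

theorem qFact_mul_prod_qInt (q : ℂ) (k l : ℕ) :
    qFact q k * ∏ j ∈ range l, qInt q (k + j + 1) = qFact q (k + l) :=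
  (prod_range_add _ k l).symm

theorem qFact_ne_zero {q : ℂ} {m : ℕ} (hq : ∀ j : ℕ, 1 ≤ j → j ≤ m → qInt q j ≠ 0) :
    qFact q m ≠ 0 :=
  prod_ne_zero_iff.2 fun j hj => hq (j + 1) (by omega) (by have := mem_range.1 hj; omega)

theorem qBinom_add_mul_qFact_mul_qFact (q : ℂ) (k l : ℕ) :
    qBinom q (k + l) k * qFact q k * qFact q l = qFact q (k + l) := by
  induction l generalizing k with
  | zero => rw [add_zero, qBinom.self, qFact_zero, one_mul, mul_one]
  | succ l ihl =>
    induction k with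
    | zero => rw [zero_add, qBinom.zero_right, qFact_zero, one_mul, one_mul]
    | succ k ihk =>
      have hstep : qInt q (k + l + 2) = qInt q (k + 1) + q ^ (k + 1) * qInt q (l + 1) := by
        rw [← qInt_add]; ring_nf
      have hleft := ihl (k + 1)
      rw [add_right_comm] at hleft
      rw [← add_assoc] at ihk
      rw [qFact_succ] at hleft ihk
      rw [show k + 1 + (l + 1) = k + l + 1 + 1 by ring, qBinom.succ_succ, qFact_succ q (k + l + 1),
        qFact_succ q k, qFact_succ q l, hstep]
      linear_combination qInt q (k + 1) * ihk + q ^ (k + 1) * qInt q (l + 1) * hleft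

/-- If `(j)_q ≠ 0` for `1 ≤ j ≤ n` and `T_q` is the matrix with
superdiagonal entries `(T_q)_{k,k+1} = (k+1)_q` and zeros elsewhere, then the finite
`q`-exponential sum `E = ∑_{m=0}^n (1/(m)!_q) T_q^m` has entries `E_{km} = C(m,k)_q`. -/
theorem qExp_superdiagonal_eq_qPascal (n : ℕ) (q : ℂ)
    (hq : ∀ j : ℕ, 1 ≤ j → j ≤ n → qInt q j ≠ 0)
    (Tq : Matrix (Fin (n + 1)) (Fin (n + 1)) ℂ)
    (hT : ∀ k m : Fin (n + 1), Tq k m = if m.val = k.val + 1 then qInt q (k.val + 1) else 0) :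
    ∀ k m : Fin (n + 1),
      (∑ i ∈ Finset.range (n + 1), (qFact q i)⁻¹ • Tq ^ i) k m = qBinom q m.val k.val := by
  intro k m
  have hpow := Matrix.pow_superdiag_apply (fun j => qInt q (j + 1)) Tq hT
  simp only [Matrix.sum_apply, Matrix.smul_apply, smul_eq_mul, hpow, mul_ite, mul_zero]
  rcases le_or_gt k.val m.val with hkm | hmk
  · obtain ⟨l, hl⟩ := Nat.exists_eq_add_of_le hkm
    have hl_mem : l ∈ range (n + 1) := mem_range.2 (by omega)
    rw [sum_eq_single l (fun i _ hi => if_neg (by omega)) (absurd hl_mem), if_pos hl, hl]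
    have hfk : qFact q k ≠ 0 := qFact_ne_zero fun j h1 h2 => hq j h1 (by omega)
    have hfl : qFact q l ≠ 0 := qFact_ne_zero fun j h1 h2 => hq j h1 (by omega)
    have hbinom := qBinom_add_mul_qFact_mul_qFact q k l
    rw [← qFact_mul_prod_qInt] at hbinom
    field_simp
    exact mul_left_cancel₀ hfk (by linear_combination -hbinom)
  · rw [qBinom.eq_zero_of_lt q hmk]
    exact sum_eq_zero fun i _ => if_neg (by omega)
end

section
/- Let λ₀, λ₁ ∈ ℂ be nonzero and consider the 2×2 complex matrices A = [[λ₀, λ₁],[0, λ₁]] and B = [[λ₁, 0],[-λ₀, λ₀]]. There exists a ℂ-subspace W of ℂ² with W ≠ 0 and W ≠ ℂ² that is invariant under both linear maps x ↦ A·x and x ↦ B·x if and only if λ₀² − λ₀·λ₁ + λ₁² = 0 (equivalently, λ₁ = α·λ₀ with α² − α + 1 = 0). -/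
/-!
A nonzero proper subspace of a plane is a line, and a line is invariant under a map exactly when
it is spanned by an eigenvector, so the question is whether `A` and `B` share an eigenvector.
Since `λ₀, λ₁ ≠ 0`, a common eigenvector has both coordinates nonzero, which forces both
eigenvalues to be `λ₁`; the two remaining eigen-equations are then compatible exactly when
`λ₀² - λ₀λ₁ + λ₁² = 0`.
-/

open Module Submodule

section InvariantLine

variable {K V : Type*} [Field K] [AddCommGroup V] [Module K V]

theorem finrank_eq_one_of_ne_bot_of_ne_top (hV : finrank K V = 2) {W : Submodule K V}
    (hbot : W ≠ ⊥) (htop : W ≠ ⊤) : finrank K W = 1 := by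
  have : FiniteDimensional K V := .of_finrank_eq_succ hV
  have hpos := one_le_finrank_iff.mpr hbot
  have hlt := finrank_lt htop
  omega

theorem apply_mem_span_singleton_of_eq_smul {f : V →ₗ[K] V} {v : V} {a : K}
    (hv : f v = a • v) {x : V} (hx : x ∈ K ∙ v) : f x ∈ K ∙ v := by
  obtain ⟨c, rfl⟩ := mem_span_singleton.mp hx
  rw [map_smul, hv]
  exact smul_mem _ _ (smul_mem _ _ (mem_span_singleton_self v))

theorem exists_invariant_submodule_iff_exists_common_eigenvector (hV : finrank K V = 2)
    (f g : V →ₗ[K] V) :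
    (∃ W : Submodule K V, W ≠ ⊥ ∧ W ≠ ⊤ ∧ (∀ x ∈ W, f x ∈ W) ∧ ∀ x ∈ W, g x ∈ W) ↔
      ∃ v ≠ 0, (∃ a : K, f v = a • v) ∧ ∃ b : K, g v = b • v := by
  constructor
  · rintro ⟨W, hbot, htop, hf, hg⟩
    obtain ⟨v, hvW, hv⟩ := exists_mem_ne_zero_of_ne_bot hbot
    have hW : W = K ∙ v := eq_span_singleton_of_mem_of_finrank_eq_one
      (finrank_eq_one_of_ne_bot_of_ne_top hV hbot htop) hvW hv
    refine ⟨v, hv, ?_, ?_⟩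
    · obtain ⟨a, ha⟩ := mem_span_singleton.mp (hW ▸ hf v hvW)
      exact ⟨a, ha.symm⟩
    · obtain ⟨b, hb⟩ := mem_span_singleton.mp (hW ▸ hg v hvW)
      exact ⟨b, hb.symm⟩
  · rintro ⟨v, hv, ⟨a, ha⟩, ⟨b, hb⟩⟩
    refine ⟨K ∙ v, by simpa using hv, fun htop => ?_,
      fun _ => apply_mem_span_singleton_of_eq_smul ha, fun _ => apply_mem_span_singleton_of_eq_smul hb⟩
    have := finrank_span_singleton (K := K) hv
    rw [htop, finrank_top, hV] at this
    omega

end InvariantLine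

theorem exists_common_eigenvector_iff {K : Type*} [Field K] {lam0 lam1 : K} (h0 : lam0 ≠ 0)
    (h1 : lam1 ≠ 0) :
    (∃ v ≠ 0, (∃ a : K, !![lam0, lam1; 0, lam1].mulVec v = a • v) ∧
        ∃ b : K, !![lam1, 0; -lam0, lam0].mulVec v = b • v) ↔
      lam0 ^ 2 - lam0 * lam1 + lam1 ^ 2 = 0 := by
  simp only [Matrix.mulVec_fin_two, funext_iff, Fin.forall_fin_two, Pi.smul_apply, smul_eq_mul,
    Matrix.of_apply, Matrix.cons_val', Matrix.cons_val_zero, Matrix.cons_val_one,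
    Matrix.empty_val', Matrix.cons_val_fin_one]
  constructor
  · rintro ⟨v, hv, ⟨a, hA0, hA1⟩, ⟨b, hB0, hB1⟩⟩
    have hy : v 1 ≠ 0 := by
      intro hy
      have hx : v 0 = 0 := by simpa [hy, h0] using hB1
      exact hv (funext <| Fin.forall_fin_two.mpr ⟨hx, hy⟩)
    have hx : v 0 ≠ 0 := fun hx => h1 (by simpa [hx, hy] using hA0)
    have ha : a = lam1 := mul_right_cancel₀ hy (by linear_combination -hA1)
    have hb : b = lam1 := mul_right_cancel₀ hx (by linear_combination -hB0)
    rw [ha] at hA0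
    rw [hb] at hB1
    refine mul_right_cancel₀ hy ?_
    linear_combination lam0 * hA0 + (lam0 - lam1) * hB1
  · intro hp
    refine ⟨![lam1, lam1 - lam0], fun h => h1 (congrFun h 0), ⟨lam1, ?_, ?_⟩, ⟨lam1, ?_, ?_⟩⟩ <;>
      simp only [Matrix.cons_val_zero, Matrix.cons_val_one]
    · ring
    · ring
    · ring
    · linear_combination -hp

/-- For nonzero `λ₀, λ₁ ∈ ℂ`, the matrices `A = [[λ₀, λ₁],[0, λ₁]]` and
`B = [[λ₁, 0],[-λ₀, λ₀]]` admit a common nontrivial invariant subspace of `ℂ²` if and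
only if `λ₀² - λ₀ λ₁ + λ₁² = 0`. -/
theorem dim2_reducible_iff (lam0 lam1 : ℂ) (h0 : lam0 ≠ 0) (h1 : lam1 ≠ 0) :
    (∃ W : Submodule ℂ (Fin 2 → ℂ), W ≠ ⊥ ∧ W ≠ ⊤ ∧
      (∀ x ∈ W, (!![lam0, lam1; 0, lam1]).mulVec x ∈ W) ∧
      (∀ x ∈ W, (!![lam1, 0; -lam0, lam0]).mulVec x ∈ W)) ↔
      lam0 ^ 2 - lam0 * lam1 + lam1 ^ 2 = 0 := by
  rw [← exists_common_eigenvector_iff h0 h1]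
  exact exists_invariant_submodule_iff_exists_common_eigenvector (Module.finrank_fin_fun ℂ)
    (Matrix.mulVecLin _) (Matrix.mulVecLin _)
end
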